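/- Let x ∈ (1/2, 1) be irrational with by-excess digits b_1, b_2, …. Then the regular continued fraction partial quotients of x are (1, n_1 − 1, b_{t_1} − 2, n_2, b_{t_2} − 2, n_3, …); that is, a_1(x) = 1, a_2(x) = n_1 − 1, and for all j ≥ 1, a_{2j+1}(x) = b_{t_j} − 2 and a_{2j+2}(x) = n_{j+1}. -/

import Mathlib

open Set Filter

/-- The Gauss map `G(t) = 1/t − ⌊1/t⌋`. -/
noncomputable def gmap (t : ℝ) : ℝ := 1 / t - ⌊1 / t⌋

/-- `ra y n = a_{n+1}(y) = ⌊1/G^n(y)⌋`, the regular continued fraction partial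
quotients of `y`. -/
noncomputable def ra (y : ℝ) (n : ℕ) : ℤ := ⌊1 / (gmap^[n] y)⌋

/-- The by-excess continued fraction map `A_0(x) = ⌊1/x + 1⌋ − 1/x`. -/
noncomputable def exm (x : ℝ) : ℝ := ⌊1 / x + 1⌋ - 1 / x

/-- `bEx x n = b_{n+1} = ⌊1/A_0^n(x) + 1⌋`, the by-excess digits of `x`. -/
noncomputable def bEx (x : ℝ) (n : ℕ) : ℤ := ⌊1 / (exm^[n] x) + 1⌋

/-- Given the increasing enumeration `t` (0-indexed: `t j` is the paper's `t_{j+1}`),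
`nOf t j` is the paper's `n_{j+1}`: `n_1 = t_1` and `n_{j+1} = t_{j+1} − t_j`. -/
def nOf (t : ℕ → ℕ) : ℕ → ℕ
  | 0 => t 0
  | j + 1 => t (j + 1) - t j

/-!
Write `u_n = A_0^n(x)`, so that `1/u_n = b_{n+1} - u_{n+1}`. The Gauss map is best read on
`1/(1 - u_n)`: a digit `b_{n+1} = c` gives `1/(1 - u_n) = 1 + 1/(c - 1 - u_{n+1})`. Along a run
`b_{n+1} = ⋯ = b_{n+m} = 2` closed by `b_{n+m+1} = c ≥ 3` this telescopes to
`1/(1 - u_n) = (m + 1) + 1/(c - 1 - u_{n+m+1})`, and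
`c - 1 - u_{n+m+1} = (c - 2) + (1 - u_{n+m+1})`.
So two Gauss steps turn `1 - u_n` into `1 - u_{n+m+1}` with quotients `m + 1` and `c - 2`.
For `x ∈ (1/2, 1)` we have `b_1 = 2`, so the first Gauss step (quotient `1`) gives `1 - u_1`.
-/

lemma ra_and_gmap_iterate_succ_of_one_div_eq {y f : ℝ} {k : ℕ} {N : ℤ}
    (h : 1 / gmap^[k] y = N + f) (hf : f ∈ Ico (0 : ℝ) 1) :
    ra y k = N ∧ gmap^[k + 1] y = f := by
  have hra : ra y k = N := by
    rw [ra, h, Int.floor_intCast_add, Int.floor_eq_zero_iff.mpr hf, add_zero]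
  refine ⟨hra, ?_⟩
  rw [Function.iterate_succ_apply']
  change 1 / gmap^[k] y - ra y k = f
  rw [hra, h]
  ring

lemma one_div_one_sub_eq_of_one_div_eq {u v c : ℝ} (h : 1 / u = c - v) (hcv : 1 + v < c) :
    1 / (1 - u) = 1 + 1 / (c - 1 - v) := by
  have hcv₀ : c - v ≠ 0 := by linarith
  have hcv₁ : c - 1 - v ≠ 0 := by linarith
  have hu : 1 - u = (c - 1 - v) / (c - v) := by
    rw [← one_div_one_div u, h]
    field_simp
    ring
  rw [hu, one_div_div]
  field_simp
  ring

lemma exm_eq_one_sub_fract (y : ℝ) : exm y = 1 - Int.fract (1 / y) := by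
  rw [exm, Int.floor_add_one, Int.fract]
  push_cast
  ring

lemma irrational_exm {y : ℝ} (hy : Irrational y) : Irrational (exm y) :=
  (one_div y ▸ hy.inv).intCast_sub _

lemma exm_mem_Ioo_of_irrational {y : ℝ} (hy : Irrational y) : exm y ∈ Ioo (0 : ℝ) 1 := by
  have hfract : Int.fract (1 / y) ≠ 0 := Int.fract_ne_zero_iff.mpr fun ⟨m, hm⟩ =>
    (one_div y ▸ hy.inv).ne_int m hm.symm
  rw [exm_eq_one_sub_fract]
  constructor
  · linarith [Int.fract_lt_one (1 / y)]
  · linarith [lt_of_le_of_ne (Int.fract_nonneg (1 / y)) hfract.symm]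

lemma irrational_exm_iterate {x : ℝ} (hirr : Irrational x) (n : ℕ) :
    Irrational (exm^[n] x) := by
  induction n with
  | zero => exact hirr
  | succ n ih => rw [Function.iterate_succ_apply']; exact irrational_exm ih

lemma exm_iterate_succ_mem_Ioo {x : ℝ} (hirr : Irrational x) (n : ℕ) :
    exm^[n + 1] x ∈ Ioo (0 : ℝ) 1 := by
  rw [Function.iterate_succ_apply']
  exact exm_mem_Ioo_of_irrational (irrational_exm_iterate hirr n)

lemma one_div_exm_iterate (x : ℝ) (n : ℕ) : 1 / exm^[n] x = bEx x n - exm^[n + 1] x := by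
  rw [Function.iterate_succ_apply', exm, bEx]
  ring

lemma two_le_bEx {x : ℝ} (hirr : Irrational x) (hx : x ∈ Ioo (0 : ℝ) 1) (n : ℕ) :
    2 ≤ bEx x n := by
  obtain ⟨h0, h1⟩ : exm^[n] x ∈ Ioo (0 : ℝ) 1 := by
    cases n with
    | zero => exact hx
    | succ n => exact exm_iterate_succ_mem_Ioo hirr n
  rw [bEx, Int.le_floor]
  push_cast
  linarith [one_le_one_div h0 h1.le]

lemma bEx_zero_eq_two {x : ℝ} (hx : x ∈ Ioo (1 / 2 : ℝ) 1) : bEx x 0 = 2 := by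
  obtain ⟨hx₁, hx₂⟩ := hx
  have hlt : 1 / x < 2 := by rw [div_lt_iff₀ (by linarith)]; linarith
  rw [bEx, Function.iterate_zero_apply, Int.floor_eq_iff]
  push_cast
  constructor <;> linarith [one_lt_one_div (by linarith) hx₂]

lemma one_div_one_sub_exm_iterate_of_twos {x : ℝ} (hirr : Irrational x) {n N : ℕ}
    (hnN : n ≤ N) (htwo : ∀ i, n ≤ i → i < N → bEx x i = 2) :
    1 / (1 - exm^[n] x) = ((N : ℝ) - n) + 1 / (1 - exm^[N] x) := by
  induction N, hnN using Nat.le_induction with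
  | base => ring
  | succ N hnN ih =>
    have hstep := one_div_one_sub_eq_of_one_div_eq (one_div_exm_iterate x N)
      (by rw [htwo N hnN N.lt_succ_self]; push_cast; linarith [(exm_iterate_succ_mem_Ioo hirr N).2])
    rw [ih fun i hni hiN => htwo i hni (by omega), hstep, htwo N hnN N.lt_succ_self]
    push_cast
    ring

lemma ra_of_block {x : ℝ} (hirr : Irrational x) {k n N : ℕ}
    (hw : gmap^[k] x = 1 - exm^[n] x) (hnN : n < N)
    (htwo : ∀ i, n ≤ i → i + 1 < N → bEx x i = 2) (hbig : 3 ≤ bEx x (N - 1)) :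
    ra x k = (N : ℤ) - n ∧ ra x (k + 1) = bEx x (N - 1) - 2 ∧
      gmap^[k + 2] x = 1 - exm^[N] x := by
  obtain ⟨M, rfl⟩ : ∃ M, N = M + 1 := ⟨N - 1, by omega⟩
  rw [Nat.add_sub_cancel] at hbig ⊢
  set c := bEx x M
  set v := exm^[M + 1] x
  obtain ⟨hv₀, hv₁⟩ := exm_iterate_succ_mem_Ioo hirr M
  have hc : (3 : ℝ) ≤ c := by exact_mod_cast hbig
  have hrun := one_div_one_sub_exm_iterate_of_twos hirr (N := M) (by omega)
    fun i hni hiM => htwo i hni (by omega)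
  have hlast : 1 / (1 - exm^[M] x) = 1 + 1 / (c - 1 - v) :=
    one_div_one_sub_eq_of_one_div_eq (one_div_exm_iterate x M) (by linarith)
  have hf : 1 / (c - 1 - v) ∈ Ico (0 : ℝ) 1 :=
    ⟨(one_div_pos.mpr (by linarith)).le, (div_lt_one (by linarith)).mpr (by linarith)⟩
  obtain ⟨hk, hk₁⟩ := ra_and_gmap_iterate_succ_of_one_div_eq (N := M + 1 - n)
    (by rw [hw, hrun, hlast]; push_cast; ring) hf
  obtain ⟨hk', hk₂⟩ := ra_and_gmap_iterate_succ_of_one_div_eq (N := c - 2) (f := 1 - v)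
    (by rw [hk₁, one_div_one_div]; push_cast; ring) ⟨by linarith, by linarith⟩
  exact ⟨by rw [hk]; push_cast; ring, hk', hk₂⟩

lemma ra_of_blocks {x : ℝ} (hirr : Irrational x) (hx : x ∈ Ioo (0 : ℝ) 1) {s : ℕ → ℕ}
    (hs : StrictMono s) (hbig : ∀ j, 3 ≤ bEx x (s (j + 1) - 1))
    (hall : ∀ i, 3 ≤ bEx x i → ∃ j, s (j + 1) = i + 1) {k : ℕ}
    (h₀ : gmap^[k] x = 1 - exm^[s 0] x) (j : ℕ) :
    ra x (2 * j + k) = (s (j + 1) : ℤ) - s j ∧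
      ra x (2 * j + k + 1) = bEx x (s (j + 1) - 1) - 2 := by
  have htwo : ∀ j i, s j ≤ i → i + 1 < s (j + 1) → bEx x i = 2 := by
    intro j i hji hij
    by_contra hne
    obtain ⟨l, hl⟩ := hall i (by have := two_le_bEx hirr hx i; omega)
    have := hs.lt_iff_lt.mp (show s j < s (l + 1) by omega)
    have := hs.lt_iff_lt.mp (show s (l + 1) < s (j + 1) by omega)
    omega
  have hblock (j : ℕ) (hw : gmap^[2 * j + k] x = 1 - exm^[s j] x) :=
    ra_of_block hirr hw (hs j.lt_succ_self) (htwo j) (hbig j)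
  have hw (j : ℕ) : gmap^[2 * j + k] x = 1 - exm^[s j] x := by
    induction j with
    | zero => simpa using h₀
    | succ j ih =>
      rw [show 2 * (j + 1) + k = 2 * j + k + 2 by ring]
      exact (hblock j ih).2.2
  exact ⟨(hblock j (hw j)).1, (hblock j (hw j)).2.1⟩

/-- The paper's `t_j` with the convention `t_0 = 1`: after the first Gauss step the
blocks start at `A_0^{t_j}(x)`. -/
def blockStart (t : ℕ → ℕ) : ℕ → ℕ
  | 0 => 1
  | j + 1 => t j

theorem cf_via_excess_big_general (x : ℝ) (hirr : Irrational x)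
    (hx : x ∈ Set.Ioo (1 / 2 : ℝ) 1) (t : ℕ → ℕ)
    (hmono : StrictMono t)
    (hmem : ∀ j, 3 ≤ bEx x (t j - 1))
    (hall : ∀ n : ℕ, 3 ≤ bEx x n → ∃ j, t j = n + 1) :
    ra x 0 = 1 ∧ ra x 1 = (nOf t 0 : ℤ) - 1 ∧
      ∀ j : ℕ, ra x (2 * j + 2) = bEx x (t j - 1) - 2 ∧
        ra x (2 * j + 3) = (nOf t (j + 1) : ℤ) := by
  have hx₀ : x ∈ Ioo (0 : ℝ) 1 := ⟨by linarith [hx.1], hx.2⟩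
  have hb₀ := bEx_zero_eq_two hx
  have hx_inv : 1 / x = 2 - exm^[1] x := by
    simpa [hb₀] using one_div_exm_iterate x 0
  obtain ⟨hu₀, hu₁⟩ := exm_iterate_succ_mem_Ioo hirr 0
  obtain ⟨hra₀, hw₁⟩ := ra_and_gmap_iterate_succ_of_one_div_eq (y := x) (k := 0) (N := 1)
    (f := 1 - exm^[1] x) (by rw [Function.iterate_zero_apply, hx_inv]; push_cast; ring)
    ⟨by linarith, by linarith⟩
  have ht₀ : 1 < t 0 := by
    by_contra! h
    have := hmem 0
    rw [show t 0 - 1 = 0 by omega, hb₀] at this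
    omega
  have hs : StrictMono (blockStart t) := strictMono_nat_of_lt_succ fun j => by
    cases j with
    | zero => exact ht₀
    | succ j => exact hmono j.lt_succ_self
  have hblocks := ra_of_blocks hirr hx₀ hs hmem hall (k := 1) hw₁
  refine ⟨hra₀, (hblocks 0).1, fun j => ⟨(hblocks j).2, ?_⟩⟩
  rw [nOf, Nat.cast_sub (hmono j.lt_succ_self).le]
  exact (hblocks (j + 1)).1

/-- Proposition 2.8: let `x ∈ (1/2,1)` be irrational with by-excess digits
`b_1, b_2, …`, and let `t_1 < t_2 < ⋯` enumerate `{n ≥ 1 : b_n ≥ 3}` (here `t j` is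
the paper's `t_{j+1}`). Then the regular continued fraction of `x` is
`(1, n_1 − 1, b_{t_1} − 2, n_2, b_{t_2} − 2, n_3, …)`, i.e. `a_1(x) = 1`,
`a_2(x) = n_1 − 1`, and for all `j ≥ 1`, `a_{2j+1}(x) = b_{t_j} − 2` and
`a_{2j+2}(x) = n_{j+1}`. -/
theorem cf_via_excess_big (x : ℝ) (hirr : Irrational x)
    (hx : x ∈ Set.Ioo (1 / 2 : ℝ) 1) (t : ℕ → ℕ)
    (ht1 : ∀ j, 1 ≤ t j) (hmono : StrictMono t)
    (hmem : ∀ j, 3 ≤ bEx x (t j - 1))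
    (hall : ∀ n : ℕ, 3 ≤ bEx x n → ∃ j, t j = n + 1) :
    ra x 0 = 1 ∧ ra x 1 = (nOf t 0 : ℤ) - 1 ∧
      ∀ j : ℕ, ra x (2 * j + 2) = bEx x (t j - 1) - 2 ∧
        ra x (2 * j + 3) = (nOf t (j + 1) : ℤ) :=
  cf_via_excess_big_general x hirr hx t hmono hmem hall
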